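/- arXiv:1309.7084 — 6 statements merged into one kernel-verified Lean document; each statement's English description precedes it below -/
import Mathlib

section
/- Let a, b, c ∈ ℝ² and let y ∈ [0,1]. Set a' = c + y·(a − c) and b' = c + y·(b − c), and let q be any point of the segment [a', b']. Then Area(a, a', q) + Area(b, b', q) = y·(1 − y)·Area(a, b, c); in particular, Area(a, a', q) + Area(b, b', q) ≤ Area(a, b, c)/4. -/
/-- det of the 2×2 matrix with columns `u` and `v`. -/
def det2 (u v : ℝ × ℝ) : ℝ := u.1 * v.2 - u.2 * v.1

/-- Unsigned area of the triangle with vertices `p q r`. -/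
noncomputable def area (p q r : ℝ × ℝ) : ℝ := |det2 (q - p) (r - p)| / 2

/-- with `a' = c + y·(a−c)`, `b' = c + y·(b−c)` and `q` on the segment
`[a', b']`, we have `Area(a,a',q) + Area(b,b',q) = y(1−y)·Area(a,b,c) ≤ Area(a,b,c)/4`. -/
theorem chord_area_shrinkage (a b c : ℝ × ℝ) (y : ℝ) (hy : y ∈ Set.Icc (0 : ℝ) 1)
    (a' b' q : ℝ × ℝ) (ha' : a' = c + y • (a - c)) (hb' : b' = c + y • (b - c))
    (hq : q ∈ segment ℝ a' b') :
    area a a' q + area b b' q = y * (1 - y) * area a b c ∧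
    area a a' q + area b b' q ≤ area a b c / 4 := by
  obtain ⟨hy0, hy1⟩ := hy
  obtain ⟨u, v, hu, hv, huv, rfl⟩ := hq
  subst ha' hb'
  have hu' : u = 1 - v := by linarith
  subst hu'
  set D : ℝ := det2 (b - a) (c - a) with hD
  have key1 : det2 ((c + y • (a - c)) - a)
      (((1 - v) • (c + y • (a - c)) + v • (c + y • (b - c))) - a)
      = (y - 1) * (y * v) * D := by
    simp only [hD, det2, Prod.fst_add, Prod.snd_add, Prod.fst_sub, Prod.snd_sub,
      Prod.smul_fst, Prod.smul_snd, smul_eq_mul]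
    ring
  have key2 : det2 ((c + y • (b - c)) - b)
      (((1 - v) • (c + y • (a - c)) + v • (c + y • (b - c))) - b)
      = (1 - y) * (y * (1 - v)) * D := by
    simp only [hD, det2, Prod.fst_add, Prod.snd_add, Prod.fst_sub, Prod.snd_sub,
      Prod.smul_fst, Prod.smul_snd, smul_eq_mul]
    ring
  have habs1 : |(y - 1) * (y * v) * D| = (1 - y) * (y * v) * |D| := by
    rw [abs_mul, abs_mul, abs_of_nonpos (by linarith), abs_of_nonneg (by positivity)]
    ring
  have habs2 : |(1 - y) * (y * (1 - v)) * D| = (1 - y) * (y * (1 - v)) * |D| := by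
    rw [abs_mul, abs_mul, abs_of_nonneg (by linarith),
      abs_of_nonneg (by nlinarith)]
  have heq : area a (c + y • (a - c)) ((1 - v) • (c + y • (a - c)) + v • (c + y • (b - c)))
      + area b (c + y • (b - c)) ((1 - v) • (c + y • (a - c)) + v • (c + y • (b - c)))
      = y * (1 - y) * area a b c := by
    simp only [area, key1, key2, habs1, habs2]
    ring
  refine ⟨heq, ?_⟩
  rw [heq]
  have hA : (0 : ℝ) ≤ area a b c := by unfold area; positivity
  nlinarith [sq_nonneg (y - 1/2)]
end

section
/- Let a, b, c ∈ ℝ² have strictly positive coordinates, with x(a) ≤ x(c) ≤ x(b), y(a) ≥ y(c) ≥ y(b), x(a) < x(b) and y(a) > y(b). Suppose there exists r > 0 such that the point (1 + r)·c lies on the line through a and b (i.e., c lies strictly below the segment ab, at ratio distance r from the line). Let α = min{x(c), y(c)}. Then Area(a, b, c) ≥ r²·α². In particular, if Area(a, b, c) ≤ ε²·α² for some ε ≥ 0, then r ≤ ε. -/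
/-- for a triangle `abc` with positive coordinates, `c` between `a` and `b`
in both coordinates and at ratio distance `r` below the line through `a` and `b`,
we have `Area(a,b,c) ≥ r²·α²` where `α = min{x(c), y(c)}`; hence if
`Area(a,b,c) ≤ ε²·α²` then `r ≤ ε`. -/
theorem area_vs_ratio_distance (a b c : ℝ × ℝ)
    (hax : 0 < a.1) (hay : 0 < a.2) (hbx : 0 < b.1) (hby : 0 < b.2)
    (hcx : 0 < c.1) (hcy : 0 < c.2)
    (hac : a.1 ≤ c.1) (hcb : c.1 ≤ b.1) (hbc : b.2 ≤ c.2) (hca : c.2 ≤ a.2)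
    (haxb : a.1 < b.1) (hbya : b.2 < a.2)
    (r : ℝ) (hr : 0 < r)
    (hline : (1 + r) • c ∈ affineSpan ℝ ({a, b} : Set (ℝ × ℝ))) :
    r ^ 2 * min c.1 c.2 ^ 2 ≤ area a b c ∧
    ∀ ε : ℝ, 0 ≤ ε → area a b c ≤ ε ^ 2 * min c.1 c.2 ^ 2 → r ≤ ε := by
  -- extract the parameter t
  have hmem : ((1 + r) • c - a) +ᵥ a ∈ line[ℝ, a, b] := by
    simpa using hline
  obtain ⟨t, ht⟩ := (vadd_left_mem_affineSpan_pair).1 hmem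
  have h1 : t * (b.1 - a.1) = (1 + r) * c.1 - a.1 := by
    have := congrArg Prod.fst ht
    simpa using this
  have h2 : t * (b.2 - a.2) = (1 + r) * c.2 - a.2 := by
    have := congrArg Prod.snd ht
    simpa using this
  have hupos : 0 < b.1 - a.1 := by linarith
  have hvpos : 0 < a.2 - b.2 := by linarith
  have htu : r * c.1 ≤ t * (b.1 - a.1) := by nlinarith
  have htv : r * c.2 ≤ (1 - t) * (a.2 - b.2) := by nlinarith
  have htpos : 0 < t := by nlinarith
  have ht1 : t < 1 := by nlinarith
  -- key inequality
  have hkey : 4 * r * (c.1 * c.2) ≤ (b.1 - a.1) * c.2 + (a.2 - b.2) * c.1 := by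
    have h4 : r * (c.1 * c.2) ≤ t * (1 - t) * ((b.1 - a.1) * c.2 + (a.2 - b.2) * c.1) := by
      nlinarith [mul_le_mul htu (le_refl c.2) hcy.le (by nlinarith : (0:ℝ) ≤ t * (b.1 - a.1)),
        mul_le_mul htv (le_refl c.1) hcx.le (by nlinarith : (0:ℝ) ≤ (1 - t) * (a.2 - b.2))]
    nlinarith [sq_nonneg (2 * t - 1), mul_pos htpos (sub_pos.mpr ht1),
      mul_pos (mul_pos hupos hcy) (mul_pos htpos (sub_pos.mpr ht1)),
      mul_pos (mul_pos hvpos hcx) (mul_pos htpos (sub_pos.mpr ht1))]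
  -- compute the determinant
  have hdet : det2 (b - a) (c - a)
      = -(r * ((b.1 - a.1) * c.2 + (a.2 - b.2) * c.1)) := by
    simp only [det2, Prod.fst_sub, Prod.snd_sub]
    linear_combination (b.2 - a.2) * h1 - (b.1 - a.1) * h2
  have hpos : 0 < (b.1 - a.1) * c.2 + (a.2 - b.2) * c.1 := by positivity
  have harea : area a b c = r * ((b.1 - a.1) * c.2 + (a.2 - b.2) * c.1) / 2 := by
    rw [area, hdet, abs_neg, abs_of_pos (by positivity)]
  have hαpos : 0 < min c.1 c.2 := lt_min hcx hcy
  have hαsq : min c.1 c.2 ^ 2 ≤ c.1 * c.2 := by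
    have h1' : min c.1 c.2 ≤ c.1 := min_le_left _ _
    have h2' : min c.1 c.2 ≤ c.2 := min_le_right _ _
    nlinarith
  have hmain : r ^ 2 * min c.1 c.2 ^ 2 ≤ area a b c := by
    rw [harea]
    have e1 : r ^ 2 * min c.1 c.2 ^ 2 ≤ r ^ 2 * (c.1 * c.2) :=
      mul_le_mul_of_nonneg_left hαsq (sq_nonneg r)
    have e2 : r * (4 * r * (c.1 * c.2)) ≤ r * ((b.1 - a.1) * c.2 + (a.2 - b.2) * c.1) :=
      mul_le_mul_of_nonneg_left hkey hr.le
    have e3 : r * (4 * r * (c.1 * c.2)) = 4 * (r ^ 2 * (c.1 * c.2)) := by ring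
    have e4 : 0 ≤ r ^ 2 * (c.1 * c.2) := by positivity
    linarith
  refine ⟨hmain, fun ε hε hle => ?_⟩
  have hsq : r ^ 2 ≤ ε ^ 2 := by
    have h := hmain.trans hle
    exact (mul_le_mul_iff_left₀ (pow_pos hαpos 2)).1 h
  exact le_of_pow_le_pow_left₀ two_ne_zero hε hsq
end

section
/- Let L, λ > 0 and δ ∈ [0, L). Let s₁ = (1 + δ, 1 + λ(L − δ)) and b = (1 + L, 1), and let s₂ = (1 + δₓ, 1 + δ_y) be a point with δ ≤ δₓ, 0 ≤ δ_y, and λδₓ + δ_y ≤ λL (so s₂ lies in the triangle with vertices s₁, (1 + δ, 1) and b, on or below the line through s₁ and b). Then: (i) the horizontal distance from s₂ to the line through s₁ and b equals L − δₓ − δ_y/λ ≥ 0; (ii) there is a unique r ≥ 0 such that (1 + r)·s₂ lies on the line through s₁ and b, and r = (L − δₓ − δ_y/λ)/(1 + δₓ + (1 + δ_y)/λ); and (iii) r ≤ L − δₓ − δ_y/λ ≤ r + L² + L/λ. -/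
/-- The line through `(1+δ, 1+λ(L−δ))` and `(1+L, 1)` is `{q : λq₁ + q₂ = λ(1+L) + 1}`. -/
lemma mem_line_iff_aux (L lam δ : ℝ) (hlam : lam ≠ 0) (hδL : δ ≠ L) (q : ℝ × ℝ) :
    q ∈ affineSpan ℝ ({((1 + δ, 1 + lam * (L - δ)) : ℝ × ℝ), ((1 + L, 1) : ℝ × ℝ)} :
      Set (ℝ × ℝ)) ↔ lam * q.1 + q.2 = lam * (1 + L) + 1 := by
  set p₁ : ℝ × ℝ := (1 + δ, 1 + lam * (L - δ))
  set p₂ : ℝ × ℝ := (1 + L, 1)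
  have key : q ∈ line[ℝ, p₁, p₂] ↔ ∃ r : ℝ, r • (p₂ -ᵥ p₁) = q - p₁ := by
    have h := vadd_left_mem_affineSpan_pair (k := ℝ) (p₁ := p₁) (p₂ := p₂) (v := q - p₁)
    simpa using h
  rw [key]
  constructor
  · rintro ⟨r, hr⟩
    have h1 : r * (p₂.1 - p₁.1) = q.1 - p₁.1 := congrArg Prod.fst hr
    have h2 : r * (p₂.2 - p₁.2) = q.2 - p₁.2 := congrArg Prod.snd hr
    simp only [p₁, p₂] at h1 h2
    linear_combination -lam * h1 - h2
  · intro h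
    refine ⟨(q.1 - (1 + δ)) / (L - δ), ?_⟩
    have hLδ : L - δ ≠ 0 := sub_ne_zero.mpr (Ne.symm hδL)
    have : q.2 = lam * (1 + L) + 1 - lam * q.1 := by linarith
    ext
    · show (q.1 - (1 + δ)) / (L - δ) * (p₂.1 - p₁.1) = q.1 - p₁.1
      simp only [p₁, p₂]
      field_simp
      ring
    · show (q.1 - (1 + δ)) / (L - δ) * (p₂.2 - p₁.2) = q.2 - p₁.2
      simp only [p₁, p₂]
      rw [this]
      field_simp
      ring

/-- relation between the horizontal distance and the ratio distance of a
point `s₂` of the triangle `△(s₁ c' b)` from the line through `s₁` and `b`. -/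
theorem horizontal_vs_ratio_distance (L lam δ δx δy : ℝ)
    (hL : 0 < L) (hlam : 0 < lam) (hδ0 : 0 ≤ δ) (hδL : δ < L)
    (hδx : δ ≤ δx) (hδy : 0 ≤ δy) (htri : lam * δx + δy ≤ lam * L)
    (s₁ b s₂ : ℝ × ℝ)
    (hs₁ : s₁ = (1 + δ, 1 + lam * (L - δ))) (hb : b = (1 + L, 1))
    (hs₂ : s₂ = (1 + δx, 1 + δy)) :
    -- (i) there is a unique point of the line through s₁ and b at the height of s₂,
    (∃! q : ℝ × ℝ, q ∈ affineSpan ℝ ({s₁, b} : Set (ℝ × ℝ)) ∧ q.2 = s₂.2) ∧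
    -- and the horizontal distance from s₂ to the line equals L − δx − δy/λ ≥ 0,
    (∀ q : ℝ × ℝ, q ∈ affineSpan ℝ ({s₁, b} : Set (ℝ × ℝ)) → q.2 = s₂.2 →
      max (q.1 - s₂.1) 0 = L - δx - δy / lam) ∧
    0 ≤ L - δx - δy / lam ∧
    -- (ii) there is a unique r ≥ 0 with (1 + r)·s₂ on the line,
    (∃! r : ℝ, 0 ≤ r ∧ (1 + r) • s₂ ∈ affineSpan ℝ ({s₁, b} : Set (ℝ × ℝ))) ∧
    -- and this r equals (L − δx − δy/λ)/(1 + δx + (1 + δy)/λ),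
    0 ≤ (L - δx - δy / lam) / (1 + δx + (1 + δy) / lam) ∧
    (1 + (L - δx - δy / lam) / (1 + δx + (1 + δy) / lam)) • s₂ ∈
      affineSpan ℝ ({s₁, b} : Set (ℝ × ℝ)) ∧
    -- (iii) r ≤ L − δx − δy/λ ≤ r + L² + L/λ.
    (L - δx - δy / lam) / (1 + δx + (1 + δy) / lam) ≤ L - δx - δy / lam ∧
    L - δx - δy / lam ≤
      (L - δx - δy / lam) / (1 + δx + (1 + δy) / lam) + L ^ 2 + L / lam := by
  subst hs₁ hb hs₂
  have hlam' : lam ≠ 0 := ne_of_gt hlam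
  have hmem := mem_line_iff_aux L lam δ hlam' (ne_of_lt hδL)
  -- basic quantities
  have hH : 0 ≤ L - δx - δy / lam := by
    have : δy / lam ≤ L - δx := by
      rw [div_le_iff₀ hlam]; nlinarith
    linarith
  have hD : 0 < 1 + δx + (1 + δy) / lam := by
    have : 0 < (1 + δy) / lam := div_pos (by linarith) hlam
    nlinarith [hδ0.trans hδx]
  have hδx0 : 0 ≤ δx := hδ0.trans hδx
  set H := L - δx - δy / lam with hHdef
  set D := 1 + δx + (1 + δy) / lam with hDdef
  refine ⟨?_, ?_, hH, ?_, ?_, ?_, ?_, ?_⟩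
  · -- unique point at height
    refine ⟨(1 + L - δy / lam, 1 + δy), ⟨?_, rfl⟩, ?_⟩
    · rw [hmem]; field_simp; ring
    · rintro q ⟨hq, hq2⟩
      rw [hmem] at hq
      have : q.1 = 1 + L - δy / lam := by
        simp only at hq2
        rw [hq2] at hq
        field_simp at hq ⊢
        linarith
      ext <;> simp [this, hq2]
  · -- horizontal distance value
    intro q hq hq2
    rw [hmem] at hq
    simp only at hq2
    have hq1 : q.1 = 1 + L - δy / lam := by
      rw [hq2] at hq
      field_simp at hq ⊢
      linarith
    rw [hq1]
    have : 1 + L - δy / lam - (1 + δx, 1 + δy).1 = H := by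
      simp [hHdef]; ring
    rw [this, max_eq_left hH]
  · -- unique r
    refine ⟨H / D, ⟨div_nonneg hH (le_of_lt hD), ?_⟩, ?_⟩
    · rw [hmem]
      simp only [Prod.smul_fst, Prod.smul_snd, smul_eq_mul]
      have hD0 : D ≠ 0 := ne_of_gt hD
      rw [hHdef, hDdef]
      field_simp [hHdef, hDdef]
      ring
    · rintro r ⟨hr0, hr⟩
      rw [hmem] at hr
      simp only [Prod.smul_fst, Prod.smul_snd, smul_eq_mul] at hr
      have hD0 : D ≠ 0 := ne_of_gt hD
      rw [eq_div_iff hD0]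
      simp only [hDdef, hHdef]
      field_simp at hr ⊢
      nlinarith [hr]
  · exact div_nonneg hH (le_of_lt hD)
  · rw [hmem]
    simp only [Prod.smul_fst, Prod.smul_snd, smul_eq_mul]
    have hD0 : D ≠ 0 := ne_of_gt hD
    rw [hHdef, hDdef]
    field_simp [hHdef, hDdef]
    ring
  · -- r ≤ H
    have h1 : 1 ≤ D := by
      have : 0 < (1 + δy) / lam := div_pos (by linarith) hlam
      simp only [hDdef]; linarith
    calc H / D ≤ H / 1 := div_le_div_of_nonneg_left hH (by norm_num) h1 |>.trans_eq (by norm_num)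
      _ = H := div_one H
  · -- H ≤ r + L² + L/λ
    have hD0 : D ≠ 0 := ne_of_gt hD
    have h1 : 1 ≤ D := by
      have : 0 < (1 + δy) / lam := div_pos (by linarith) hlam
      simp only [hDdef]; linarith
    have key : H - H / D = H * (D - 1) / D := by field_simp
    have h2 : H * (D - 1) / D ≤ H * (D - 1) := div_le_self (mul_nonneg hH (by linarith)) h1
    have hv : 0 ≤ δy / lam := div_nonneg hδy hlam.le
    have hinv : 0 < 1 / lam := by positivity
    have hDe : D - 1 = δx + 1 / lam + δy / lam := by
      simp only [hDdef]; field_simp; ring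
    have h3 : H * (D - 1) ≤ L ^ 2 + L / lam := by
      rw [hDe, hHdef]
      have hH' : 0 ≤ L - δx - δy / lam := hHdef ▸ hH
      have hvle : δy / lam ≤ L - δx := by linarith
      have e1 : (L - (δx + δy / lam)) * (δx + δy / lam) ≤ L * L := by nlinarith
      have e2 : (L - δx - δy / lam) * (1 / lam) ≤ L * (1 / lam) := by
        apply mul_le_mul_of_nonneg_right _ hinv.le
        linarith
      have e3 : L / lam = L * (1 / lam) := by ring
      nlinarith [e1, e2]
    linarith
end

section
/- Fix reals H, L > 0 and integers k ≥ 2 and j with 1 ≤ j ≤ k − 1. Define a = q₀ = (1, 1 + H), b = (1 + L, 1), q₁ = (1, 1 + H/k), and recursively for 2 ≤ i ≤ j: q_i is the unique point on the line through q_{i−1} with direction vector b − q_{i−2} whose y-coordinate equals 1 + (y(q_{i−1}) − 1)/(k + i − 1) (well defined since y(q_{i−2}) > 1 = y(b)). Then for every 1 ≤ i ≤ j, the point p_i of the line through q_{i−1} and b with y(p_i) = y(q_i) satisfies x(p_i) − x(q_i) = L·(k − 1)/(k + i − 1); that is, the horizontal distance from q_i to the line through q_{i−1} and b equals L·(k −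 1)/(k + i − 1). -/
/-- The sequence of points `q_i` of the lower-bound instance: `q₀ = a = (1, 1+H)`,
`q₁ = (1, 1 + H/k)`, and for `i ≥ 2`, `q_i` is the point on the line through `q_{i−1}`
with direction `b − q_{i−2}` (where `b = (1+L, 1)`) whose `y`-coordinate is
`1 + (y(q_{i−1}) − 1)/(k + i − 1)`. -/
noncomputable def qseq (H L : ℝ) (k : ℕ) : ℕ → ℝ × ℝ
  | 0 => (1, 1 + H)
  | 1 => (1, 1 + H / (k : ℝ))
  | (n + 2) =>
      let qp := qseq H L k (n + 1)
      let qpp := qseq H L k n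
      let b : ℝ × ℝ := (1 + L, 1)
      let ynew : ℝ := 1 + (qp.2 - 1) / ((k : ℝ) + (n : ℝ) + 1)
      qp + ((ynew - qp.2) / (b.2 - qpp.2)) • (b - qpp)

private lemma qseq_y (H L : ℝ) (hH : 0 < H) (k : ℕ) (hk : 2 ≤ k) :
    ∀ n : ℕ, 0 < (qseq H L k n).2 - 1 ∧
      (qseq H L k (n + 1)).2 - 1 = ((qseq H L k n).2 - 1) / ((k : ℝ) + n) := by
  have hk2 : (2 : ℝ) ≤ (k : ℝ) := by exact_mod_cast hk
  intro n
  induction n with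
  | zero =>
      constructor
      · simp [qseq]; linarith
      · simp [qseq]
  | succ n ih =>
      obtain ⟨hpos, hrec⟩ := ih
      have hkn : (0 : ℝ) < (k : ℝ) + n := by positivity
      have hpos' : 0 < (qseq H L k (n + 1)).2 - 1 := by
        rw [hrec]; positivity
      refine ⟨hpos', ?_⟩
      have hb : (1 : ℝ) - (qseq H L k n).2 ≠ 0 := fun h => ne_of_gt hpos (by linarith)
      show (qseq H L k (n + 2)).2 - 1 = _
      rw [qseq]
      simp only [Prod.snd_add, Prod.smul_snd, smul_eq_mul, Prod.snd_sub]
      rw [div_mul_cancel₀ _ hb]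
      push_cast
      ring

private lemma qseq_x (H L : ℝ) (hH : 0 < H) (k : ℕ) (hk : 2 ≤ k) (n : ℕ) :
    (qseq H L k (n + 2)).1
      = (qseq H L k (n + 1)).1 + (1 + L - (qseq H L k n).1) / ((k : ℝ) + n + 1) := by
  have hk2 : (2 : ℝ) ≤ (k : ℝ) := by exact_mod_cast hk
  have hkn : ((k : ℝ) + n) ≠ 0 := by positivity
  have hkn1 : ((k : ℝ) + n + 1) ≠ 0 := by positivity
  obtain ⟨hpos, hrec⟩ := qseq_y H L hH k hk n
  have hne : (qseq H L k n).2 - 1 ≠ 0 := ne_of_gt hpos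
  have hb : (1 : ℝ) - (qseq H L k n).2 ≠ 0 := fun h => hne (by linarith)
  have h3 : (qseq H L k (n + 1)).2 = 1 + ((qseq H L k n).2 - 1) / ((k : ℝ) + n) := by
    linarith [hrec]
  rw [qseq]
  simp only [Prod.fst_add, Prod.smul_fst, smul_eq_mul, Prod.fst_sub]
  rw [h3]
  push_cast
  field_simp
  ring

private lemma qseq_e (H L : ℝ) (hH : 0 < H) (k : ℕ) (hk : 2 ≤ k) :
    ∀ n : ℕ, ((k : ℝ) + n) * (1 + L - (qseq H L k (n + 1)).1)
        - (1 + L - (qseq H L k n).1) = L * ((k : ℝ) - 1) := by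
  have hk2 : (2 : ℝ) ≤ (k : ℝ) := by exact_mod_cast hk
  intro n
  induction n with
  | zero => simp [qseq]; ring
  | succ n ih =>
      have hkn1 : ((k : ℝ) + n + 1) ≠ 0 := by positivity
      have hx := qseq_x H L hH k hk n
      have key : ((k : ℝ) + n + 1) * ((1 + L - (qseq H L k n).1) / ((k : ℝ) + n + 1))
          = 1 + L - (qseq H L k n).1 := mul_div_cancel₀ _ hkn1
      push_cast
      rw [hx]
      linear_combination ih - key

/-- for `1 ≤ i ≤ j`, the point `p` of the line through `q_{i−1}` and
`b = (1+L, 1)` at the height of `q_i` satisfies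
`x(p) − x(q_i) = L·(k−1)/(k+i−1)`; i.e. the horizontal distance from `q_i` to that
line equals `L·(k−1)/(k+i−1)`. -/
theorem horizontal_distance_of_qseq (H L : ℝ) (hH : 0 < H) (hL : 0 < L)
    (k j : ℕ) (hk : 2 ≤ k) (hj1 : 1 ≤ j) (hjk : j ≤ k - 1) :
    ∀ i : ℕ, 1 ≤ i → i ≤ j →
      ∀ p : ℝ × ℝ,
        p ∈ affineSpan ℝ ({qseq H L k (i - 1), ((1 + L, 1) : ℝ × ℝ)} : Set (ℝ × ℝ)) →
        p.2 = (qseq H L k i).2 →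
        p.1 - (qseq H L k i).1 = L * ((k : ℝ) - 1) / ((k : ℝ) + (i : ℝ) - 1) ∧
        max (p.1 - (qseq H L k i).1) 0 = L * ((k : ℝ) - 1) / ((k : ℝ) + (i : ℝ) - 1) := by
  have hk2 : (2 : ℝ) ≤ (k : ℝ) := by exact_mod_cast hk
  intro i hi1 hij p hp hy
  obtain ⟨m, rfl⟩ : ∃ m, i = m + 1 := ⟨i - 1, (Nat.succ_pred_eq_of_pos hi1).symm⟩
  have hm : m + 1 - 1 = m := rfl
  rw [hm] at hp
  have hkm : (0 : ℝ) < (k : ℝ) + m := by positivity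
  obtain ⟨hpos, hrec⟩ := qseq_y H L hH k hk m
  have hne : (qseq H L k m).2 - 1 ≠ 0 := ne_of_gt hpos
  have hp' : (p -ᵥ qseq H L k m) +ᵥ qseq H L k m
      ∈ affineSpan ℝ ({qseq H L k m, ((1 + L, 1) : ℝ × ℝ)} : Set (ℝ × ℝ)) := by
    rwa [vsub_vadd]
  obtain ⟨r, hr⟩ := vadd_left_mem_affineSpan_pair.mp hp'
  have hrc := hr
  simp only [Prod.ext_iff, Prod.smul_fst, Prod.smul_snd, Prod.fst_vsub, Prod.snd_vsub,
    vsub_eq_sub, smul_eq_mul, Prod.fst_sub, Prod.snd_sub] at hrc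
  obtain ⟨hr1, hr2⟩ := hrc
  have h1 : p.1 = (qseq H L k m).1 + r * (1 + L - (qseq H L k m).1) := by
    linear_combination -hr1
  have h2 : p.2 = (qseq H L k m).2 + r * (1 - (qseq H L k m).2) := by
    linear_combination -hr2
  -- determine r
  have hrval : r = ((k : ℝ) + m - 1) / ((k : ℝ) + m) := by
    have h3 : p.2 - 1 = ((qseq H L k m).2 - 1) / ((k : ℝ) + m) := by rw [hy]; exact hrec
    rw [h2] at h3
    have h5 : (1 - r) = 1 / ((k : ℝ) + m) :=
      mul_right_cancel₀ hne (by rw [div_eq_mul_inv] at h3 ⊢; linarith)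
    field_simp at h5 ⊢
    linarith
  have main : p.1 - (qseq H L k (m + 1)).1 = L * ((k : ℝ) - 1) / ((k : ℝ) + m) := by
    match m, h1, hrval, hkm with
    | 0, h1, hrval, hkm =>
        have hx0 : (qseq H L k 1).1 = 1 := by simp [qseq]
        have hx0' : (qseq H L k 0).1 = 1 := by simp [qseq]
        rw [hx0, h1, hx0', hrval]
        push_cast
        have hk0 : (k : ℝ) ≠ 0 := by linarith
        field_simp
        ring
    | n + 1, h1, hrval, hkm =>
        have hkn1 : ((k : ℝ) + n + 1) ≠ 0 := by positivity
        have hx := qseq_x H L hH k hk n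
        have ie := qseq_e H L hH k hk n
        push_cast at h1 hrval hx ie ⊢
        rw [h1, hx, hrval]
        linear_combination ie / ((k : ℝ) + n + 1)
  have hden : (k : ℝ) + ((m : ℕ) + 1 : ℕ) - 1 = (k : ℝ) + m := by push_cast; ring
  rw [hden, main]
  have hnn : (0 : ℝ) ≤ L * ((k : ℝ) - 1) / ((k : ℝ) + m) := by
    apply div_nonneg _ (le_of_lt hkm)
    nlinarith
  exact ⟨rfl, max_eq_left hnn⟩
end

section
/- Fix reals H, L > 0 and integers k ≥ 2 and j with 1 ≤ j ≤ k − 1. Define a = q₀ = (1, 1 + H), b = (1 + L, 1), q₁ = (1, 1 + H/k), and recursively for 2 ≤ i ≤ j: q_i is the unique point on the line through q_{i−1} with direction vector b − q_{i−2} whose y-coordinate equals 1 + (y(q_{i−1}) − 1)/(k + i − 1) (well defined since y(q_{i−2}) > 1 = y(b)). Then for every 1 ≤ i ≤ j, the point q_i* at which the line through q_i with direction vector b − q_{i−1} meets the horizontal line {y = 1} satisfies x(q_i*) = 1 + L·i/(k + i − 1). -/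
lemma qseq_rec (H L : ℝ) (k n : ℕ) : qseq H L k (n+2) =
      (qseq H L k (n+1)) + (((1 + ((qseq H L k (n+1)).2 - 1) / ((k : ℝ) + (n : ℝ) + 1)) - (qseq H L k (n+1)).2) / (1 - (qseq H L k n).2)) • (((1 + L, 1) : ℝ × ℝ) - qseq H L k n) := by
  rw [qseq]

lemma qseq_snd (H L : ℝ) (hH : 0 < H) (k : ℕ) (hk : 1 ≤ k) :
    ∀ n : ℕ, 1 < (qseq H L k n).2 ∧
      (qseq H L k (n+1)).2 - 1 = ((qseq H L k n).2 - 1) / ((k:ℝ) + n) := by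
  have hk0 : (0:ℝ) < k := by exact_mod_cast hk
  intro n
  induction n with
  | zero =>
    refine ⟨by simp [qseq]; linarith, ?_⟩
    simp [qseq]
  | succ n ih =>
    obtain ⟨h1, h2⟩ := ih
    have hkn : (0:ℝ) < (k:ℝ) + n := by positivity
    have h1' : 1 < (qseq H L k (n+1)).2 := by
      have : 0 < ((qseq H L k n).2 - 1) / ((k:ℝ) + n) := div_pos (by linarith) hkn
      linarith
    refine ⟨h1', ?_⟩
    have hne : (1:ℝ) - (qseq H L k n).2 ≠ 0 := by linarith
    rw [qseq_rec]
    simp only [Prod.snd_add, Prod.smul_snd, Prod.snd_sub, smul_eq_mul]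
    rw [div_mul_cancel₀ _ hne]
    push_cast
    ring

lemma qseq_fst (H L : ℝ) (hH : 0 < H) (k : ℕ) (hk : 1 ≤ k) :
    ∀ n : ℕ, ((k:ℝ) + n) * ((qseq H L k (n+1)).1 - 1) - ((qseq H L k n).1 - 1) = L * n := by
  have hk0 : (0:ℝ) < k := by exact_mod_cast hk
  intro n
  induction n with
  | zero => simp [qseq]
  | succ n ih =>
    obtain ⟨h1, h2⟩ := qseq_snd H L hH k hk n
    have h1' := (qseq_snd H L hH k hk (n+1)).1
    have hkn : (0:ℝ) < (k:ℝ) + n := by positivity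
    have hkn1 : (0:ℝ) < (k:ℝ) + n + 1 := by positivity
    have hne : (1:ℝ) - (qseq H L k n).2 ≠ 0 := by linarith
    set u := (qseq H L k n).2 with hu
    set v := (qseq H L k (n+1)).2 with hvd
    have hv : v = 1 + (u - 1) / ((k:ℝ) + n) := by linarith
    have hc : ((1 + (v - 1) / ((k : ℝ) + (n : ℝ) + 1)) - v) / (1 - u) = 1 / ((k:ℝ) + n + 1) := by
      rw [hv]
      field_simp
      ring
    rw [qseq_rec]
    simp only [Prod.fst_add, Prod.smul_fst, Prod.fst_sub, smul_eq_mul]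
    rw [← hu, ← hvd, hc]
    push_cast
    field_simp
    linear_combination ((k:ℝ) + ↑n + 1) * ih

/-- for `1 ≤ i ≤ j`, the point `q_i*` where the line through `q_i` with
direction `b − q_{i−1}` (with `b = (1+L, 1)`) meets the horizontal line `{y = 1}`
satisfies `x(q_i*) = 1 + L·i/(k+i−1)`. -/
theorem x_coordinate_of_qstar (H L : ℝ) (hH : 0 < H) (hL : 0 < L)
    (k j : ℕ) (hk : 2 ≤ k) (hj1 : 1 ≤ j) (hjk : j ≤ k - 1) :
    ∀ i : ℕ, 1 ≤ i → i ≤ j →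
      ∀ t : ℝ,
        (qseq H L k i + t • (((1 + L, 1) : ℝ × ℝ) - qseq H L k (i - 1))).2 = 1 →
        (qseq H L k i + t • (((1 + L, 1) : ℝ × ℝ) - qseq H L k (i - 1))).1
          = 1 + L * (i : ℝ) / ((k : ℝ) + (i : ℝ) - 1) := by
  have hk1 : 1 ≤ k := le_trans (by norm_num) hk
  rintro i hi1 hij t ht
  obtain ⟨n, rfl⟩ : ∃ n, i = n + 1 := ⟨i - 1, (Nat.succ_pred_eq_of_pos hi1).symm⟩
  simp only [Nat.add_sub_cancel] at ht ⊢
  obtain ⟨h1, h2⟩ := qseq_snd H L hH k hk1 n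
  have hx := qseq_fst H L hH k hk1 n
  have hk0 : (0:ℝ) < k := by exact_mod_cast hk1
  have hkn : (0:ℝ) < (k:ℝ) + n := by positivity
  have hne : (1:ℝ) - (qseq H L k n).2 ≠ 0 := by linarith
  simp only [Prod.snd_add, Prod.smul_snd, Prod.snd_sub, smul_eq_mul] at ht
  have htval : t = 1 / ((k:ℝ) + n) := by
    have e1 : t * (1 - (qseq H L k n).2) = 1 - (qseq H L k (n+1)).2 := by linarith
    have e2 : ((qseq H L k (n+1)).2 - 1) * ((k:ℝ)+n) = (qseq H L k n).2 - 1 := by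
      rw [h2, div_mul_cancel₀ _ (ne_of_gt hkn)]
    have e3 : t * ((k:ℝ)+n) * (1 - (qseq H L k n).2) = 1 * (1 - (qseq H L k n).2) := by
      linear_combination ((k:ℝ)+n) * e1 - e2
    have e4 : t * ((k:ℝ)+n) = 1 := mul_right_cancel₀ hne e3
    rw [eq_div_iff (ne_of_gt hkn)]
    exact e4
  simp only [Prod.fst_add, Prod.smul_fst, Prod.fst_sub, smul_eq_mul]
  rw [htval]
  set p := (qseq H L k (n+1)).1
  set q := (qseq H L k n).1
  have hpd : ((k:ℝ)+n) * (p - 1) = L * n + (q - 1) := by linarith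
  have key : p + 1 / ((k:ℝ) + ↑n) * (1 + L - q)
      = 1 + (((k:ℝ)+n) * (p - 1) - (q - 1) + L) / ((k:ℝ)+n) := by
    field_simp
    ring
  rw [key, hx]
  push_cast
  have : (k:ℝ) + (↑n + 1) - 1 = (k:ℝ) + n := by ring
  rw [this]
  field_simp
end

section
/- Let ℓ be a line in ℝ² not passing through the origin O, and let p and p' be two distinct points, each lying strictly on the opposite side of ℓ from O, so that the segment [O, p] meets ℓ in a unique point s and the segment [O, p'] meets ℓ in a unique point s'. Assume the line through p and p' is not parallel to ℓ and meets ℓ at a point f with f ∉ {p, p'}. Define the excess ratio distances H(p) = ‖p − s‖/‖O − s‖ and H(p') = ‖p' − s'‖/‖O − s'‖. Then H(p')·‖p − f‖ = H(p)·‖p' − f‖; equivalently, H(p')/H(p) = ‖p' − f‖/‖p − f‖. -/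
private lemma mem_pair_param {E : Type*} [NormedAddCommGroup E] [NormedSpace ℝ E]
    {x a b : E} (h : x ∈ affineSpan ℝ ({a, b} : Set E)) :
    ∃ t : ℝ, x = a + t • (b - a) := by
  have h2 : (x - a) +ᵥ a ∈ affineSpan ℝ ({a, b} : Set E) := by
    simpa [vadd_eq_add, sub_add_cancel] using h
  obtain ⟨t, ht⟩ := (vadd_left_mem_affineSpan_pair (k := ℝ)).mp h2
  exact ⟨t, by rw [vsub_eq_sub] at ht; rw [ht]; abel⟩

/-- let `ℓ` be a line in the plane not through the origin, and let `p, p'`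
be distinct points strictly on the opposite side of `ℓ` from the origin, with
`s ∈ ℓ ∩ [O,p]`, `s' ∈ ℓ ∩ [O,p']`, and `f` the intersection of `ℓ` with the line
through `p` and `p'`, `f ∉ {p, p'}`.  With the excess ratio distances
`H(p) = ‖p − s‖/‖O − s‖` and `H(p') = ‖p' − s'‖/‖O − s'‖`, one has
`H(p')·‖p − f‖ = H(p)·‖p' − f‖`. -/
theorem excess_ratio_distance_ratio (u v : EuclideanSpace ℝ (Fin 2)) (huv : u ≠ v)
    (ℓ : AffineSubspace ℝ (EuclideanSpace ℝ (Fin 2)))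
    (hℓ : ℓ = affineSpan ℝ {u, v})
    (hO : (0 : EuclideanSpace ℝ (Fin 2)) ∉ ℓ)
    (p p' : EuclideanSpace ℝ (Fin 2)) (hpp' : p ≠ p')
    (hp : p ∉ ℓ) (hp' : p' ∉ ℓ)
    (s s' f : EuclideanSpace ℝ (Fin 2))
    (hsℓ : s ∈ ℓ) (hs : s ∈ segment ℝ (0 : EuclideanSpace ℝ (Fin 2)) p)
    (hs'ℓ : s' ∈ ℓ) (hs' : s' ∈ segment ℝ (0 : EuclideanSpace ℝ (Fin 2)) p')
    (hfℓ : f ∈ ℓ) (hf : f ∈ affineSpan ℝ ({p, p'} : Set (EuclideanSpace ℝ (Fin 2))))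
    (hfp : f ≠ p) (hfp' : f ≠ p') :
    (‖p' - s'‖ / ‖(0 : EuclideanSpace ℝ (Fin 2)) - s'‖) * ‖p - f‖
      = (‖p - s‖ / ‖(0 : EuclideanSpace ℝ (Fin 2)) - s‖) * ‖p' - f‖ := by
  subst hℓ
  -- a separating continuous linear functional, constant equal to k > 0 on ℓ
  obtain ⟨φ, c, hc0, hcl⟩ := geometric_hahn_banach_point_closed
    (affineSpan ℝ ({u, v} : Set (EuclideanSpace ℝ (Fin 2)))).convex
    (affineSpan ℝ ({u, v} : Set (EuclideanSpace ℝ (Fin 2)))).closed_of_finiteDimensional hO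
  rw [map_zero] at hc0
  set k := φ u with hk
  have hkc : c < k := hcl u (left_mem_affineSpan_pair ℝ u v)
  have hk0 : 0 < k := hc0.trans hkc
  have hφv : φ v = k := by
    by_contra hne
    have hD : φ v - k ≠ 0 := sub_ne_zero.mpr hne
    have h2 := hcl _ (AffineMap.lineMap_mem_affineSpan_pair ((c - k)/(φ v - k)) u v)
    rw [AffineMap.lineMap_apply_module, map_add, map_smul, map_smul, smul_eq_mul,
      smul_eq_mul] at h2
    have h3 : (1 - (c - k)/(φ v - k)) * k + (c - k)/(φ v - k) * φ v = c := by
      field_simp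
      ring
    rw [h3] at h2
    exact lt_irrefl c h2
  have hconst : ∀ x ∈ affineSpan ℝ ({u, v} : Set (EuclideanSpace ℝ (Fin 2))), φ x = k := by
    intro x hx
    obtain ⟨t, rfl⟩ := mem_pair_param hx
    simp [map_add, map_smul, map_sub, hφv, smul_eq_mul, ← hk]
  -- segment parametrizations
  obtain ⟨a1, b1, ha1, hb1, hab1, hsum1⟩ := hs
  obtain ⟨a2, b2, ha2, hb2, hab2, hsum2⟩ := hs'
  have hseq : s = b1 • p := by rw [← hsum1]; simp
  have hseq' : s' = b2 • p' := by rw [← hsum2]; simp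
  have hb1A : b1 * φ p = k := by
    have := hconst s hsℓ; rw [hseq, map_smul, smul_eq_mul] at this; exact this
  have hb2A : b2 * φ p' = k := by
    have := hconst s' hs'ℓ; rw [hseq', map_smul, smul_eq_mul] at this; exact this
  have hb1pos : 0 < b1 := by
    rcases hb1.lt_or_eq with h | h; · exact h
    · exfalso; rw [← h, zero_mul] at hb1A; linarith
  have hb2pos : 0 < b2 := by
    rcases hb2.lt_or_eq with h | h; · exact h
    · exfalso; rw [← h, zero_mul] at hb2A; linarith
  have hb1le : b1 ≤ 1 := by linarith
  have hb2le : b2 ≤ 1 := by linarith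
  have hApos : 0 < φ p := by nlinarith
  have hA'pos : 0 < φ p' := by nlinarith
  have hAne : φ p ≠ k := by
    intro h
    rw [h] at hb1A
    have hb11 : b1 = 1 := by field_simp at hb1A; linarith
    apply hp
    have : s = p := by rw [hseq, hb11, one_smul]
    rwa [← this]
  have hA'ne : φ p' ≠ k := by
    intro h
    rw [h] at hb2A
    have hb21 : b2 = 1 := by field_simp at hb2A; linarith
    apply hp'
    have : s' = p' := by rw [hseq', hb21, one_smul]
    rwa [← this]
  have hAgt : k < φ p := lt_of_le_of_ne (by nlinarith) (Ne.symm hAne)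
  have hA'gt : k < φ p' := lt_of_le_of_ne (by nlinarith) (Ne.symm hA'ne)
  -- parametrize f on the line through p, p'
  obtain ⟨r, hfr⟩ := mem_pair_param hf
  have hφf : φ p + r * (φ p' - φ p) = k := by
    have h := hconst f hfℓ
    rw [hfr, map_add, map_smul, map_sub, smul_eq_mul] at h
    exact h
  have hpne : p ≠ 0 := by intro h; rw [h, map_zero] at hApos; exact lt_irrefl 0 hApos
  have hp'ne : p' ≠ 0 := by intro h; rw [h, map_zero] at hA'pos; exact lt_irrefl 0 hA'pos
  have hnp : 0 < ‖p‖ := norm_pos_iff.mpr hpne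
  have hnp' : 0 < ‖p'‖ := norm_pos_iff.mpr hp'ne
  -- rewrite all norms
  have e1 : ‖p - s‖ = (1 - b1) * ‖p‖ := by
    have h : p - s = (1 - b1) • p := by rw [hseq, sub_smul, one_smul]
    rw [h, norm_smul, Real.norm_eq_abs, abs_of_nonneg (by linarith)]
  have e2 : ‖(0 : EuclideanSpace ℝ (Fin 2)) - s‖ = b1 * ‖p‖ := by
    rw [hseq, zero_sub, norm_neg, norm_smul, Real.norm_eq_abs, abs_of_nonneg hb1]
  have e3 : ‖p' - s'‖ = (1 - b2) * ‖p'‖ := by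
    have h : p' - s' = (1 - b2) • p' := by rw [hseq', sub_smul, one_smul]
    rw [h, norm_smul, Real.norm_eq_abs, abs_of_nonneg (by linarith)]
  have e4 : ‖(0 : EuclideanSpace ℝ (Fin 2)) - s'‖ = b2 * ‖p'‖ := by
    rw [hseq', zero_sub, norm_neg, norm_smul, Real.norm_eq_abs, abs_of_nonneg hb2]
  have e5 : ‖p - f‖ = |r| * ‖p' - p‖ := by
    have h : p - f = -(r • (p' - p)) := by rw [hfr]; abel
    rw [h, norm_neg, norm_smul, Real.norm_eq_abs]
  have e6 : ‖p' - f‖ = |1 - r| * ‖p' - p‖ := by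
    have h : p' - f = (1 - r) • (p' - p) := by rw [hfr, sub_smul, one_smul]; abel
    rw [h, norm_smul, Real.norm_eq_abs]
  rw [e1, e2, e3, e4, e5, e6, mul_div_mul_right _ _ hnp'.ne', mul_div_mul_right _ _ hnp.ne']
  -- key ratios
  have h7 : (1 - b1) / b1 = (φ p - k) / k := by
    rw [div_eq_div_iff hb1pos.ne' hk0.ne']
    linear_combination -hb1A
  have h8 : (1 - b2) / b2 = (φ p' - k) / k := by
    rw [div_eq_div_iff hb2pos.ne' hk0.ne']
    linear_combination -hb2A
  have h9 : |r| * |φ p' - φ p| = φ p - k := by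
    rw [← abs_mul]
    have h : r * (φ p' - φ p) = k - φ p := by linear_combination hφf
    rw [h, abs_of_nonpos (by linarith)]
    ring
  have h10 : |1 - r| * |φ p' - φ p| = φ p' - k := by
    rw [← abs_mul]
    have h : (1 - r) * (φ p' - φ p) = φ p' - k := by linear_combination -hφf
    rw [h, abs_of_nonneg (by linarith)]
  rw [h7, h8, ← h9, ← h10]
  ring
end
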